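/- Let D be a positive integer and G : ℂ⁶ → ℂ an entire function of the variables (ζ₁, ζ₂, ζ₃, ζ₁₂, ζ₁₃, ζ₂₃). Define the differential operator Δ_{3,D} by (Δ_{3,D}G) = D ∂₁₂G + 2ζ₁ ∂₁∂₁₂G + 2ζ₂ ∂₂∂₁₂G + ζ₃ ∂₁₃∂₂₃G + ζ₁₂(4 ∂₁∂₂G + ∂₁₂²G) + ζ₁₃(2 ∂₁∂₂₃G + ∂₁₂∂₁₃G) + ζ₂₃(2 ∂₂∂₁₃G + ∂₁₂∂₂₃G), where ∂₁, ∂₂, ∂₃, ∂₁₂, ∂₁₃, ∂₂₃ are the partial derivatives in the corresponding variables. Then for all z₁, z₂, z₃ ∈ ℂ^D, Σ_{j=1}^D (∂²/∂z_{1,j} ∂z_{2,j}) [ G(z₁·z₁, z₂·z₂, z₃·z₃, z₁·z₂, z₁·z₃, z₂·z₃) ] = (Δ_{3,D}G)(z₁·z₁, z₂·z₂, z₃·z₃, z₁·z₂, z₁·z₃, z₂·z₃). -/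

import Mathlib

noncomputable section

/-- Complex bilinear pairing `z·w = Σ_j z_j w_j` (no conjugation). -/
def cdot {D : ℕ} (z w : Fin D → ℂ) : ℂ := ∑ j, z j * w j

/-- Partial derivative in `ζ₁`. -/
def e1 (G : ℂ → ℂ → ℂ → ℂ → ℂ → ℂ → ℂ) : ℂ → ℂ → ℂ → ℂ → ℂ → ℂ → ℂ :=
  fun a b c p q s => deriv (fun t => G t b c p q s) a

/-- Partial derivative in `ζ₂`. -/
def e2 (G : ℂ → ℂ → ℂ → ℂ → ℂ → ℂ → ℂ) : ℂ → ℂ → ℂ → ℂ → ℂ → ℂ → ℂ :=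
  fun a b c p q s => deriv (fun t => G a t c p q s) b

/-- Partial derivative in `ζ₃`. -/
def e3 (G : ℂ → ℂ → ℂ → ℂ → ℂ → ℂ → ℂ) : ℂ → ℂ → ℂ → ℂ → ℂ → ℂ → ℂ :=
  fun a b c p q s => deriv (fun t => G a b t p q s) c

/-- Partial derivative in `ζ₁₂`. -/
def e12 (G : ℂ → ℂ → ℂ → ℂ → ℂ → ℂ → ℂ) : ℂ → ℂ → ℂ → ℂ → ℂ → ℂ → ℂ :=
  fun a b c p q s => deriv (fun t => G a b c t q s) p

/-- Partial derivative in `ζ₁₃`. -/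
def e13 (G : ℂ → ℂ → ℂ → ℂ → ℂ → ℂ → ℂ) : ℂ → ℂ → ℂ → ℂ → ℂ → ℂ → ℂ :=
  fun a b c p q s => deriv (fun t => G a b c p t s) q

/-- Partial derivative in `ζ₂₃`. -/
def e23 (G : ℂ → ℂ → ℂ → ℂ → ℂ → ℂ → ℂ) : ℂ → ℂ → ℂ → ℂ → ℂ → ℂ → ℂ :=
  fun a b c p q s => deriv (fun t => G a b c p q t) s

/-- The operator `Δ_{3,D}` of the paper:
`Δ_{3,D}G = D ∂₁₂G + 2ζ₁ ∂₁∂₁₂G + 2ζ₂ ∂₂∂₁₂G + ζ₃ ∂₁₃∂₂₃G + ζ₁₂(4∂₁∂₂G + ∂₁₂²G)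
 + ζ₁₃(2∂₁∂₂₃G + ∂₁₂∂₁₃G) + ζ₂₃(2∂₂∂₁₃G + ∂₁₂∂₂₃G)`. -/
def Delta3 (D : ℕ) (G : ℂ → ℂ → ℂ → ℂ → ℂ → ℂ → ℂ) :
    ℂ → ℂ → ℂ → ℂ → ℂ → ℂ → ℂ :=
  fun a b c p q s =>
    (D : ℂ) * e12 G a b c p q s
      + 2 * a * e1 (e12 G) a b c p q s
      + 2 * b * e2 (e12 G) a b c p q s
      + c * e13 (e23 G) a b c p q s
      + p * (4 * e1 (e2 G) a b c p q s + e12 (e12 G) a b c p q s)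
      + q * (2 * e1 (e23 G) a b c p q s + e12 (e13 G) a b c p q s)
      + s * (2 * e2 (e13 G) a b c p q s + e12 (e23 G) a b c p q s)

/-!
Moving only the `j`-th coordinates of `z₁` and `z₂` to `t` and `s` moves the six arguments of `G`
along a polynomial surface in `(t, s)`. Two applications of the chain rule turn the `j`-th mixed
derivative into `∂₁₂G` plus the Hessian of `G` evaluated on the two velocity vectors
`(0, 2 z₂ⱼ, 0, z₁ⱼ, 0, z₃ⱼ)` and `(2 z₁ⱼ, 0, 0, z₂ⱼ, z₃ⱼ, 0)`. Expanding the Hessian bilinearly,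
summing over `j` turns the products of coordinates into the pairings `zₐ·z_b`, and the symmetry of
the Hessian collects the terms into `Δ_{3,D}G`.
-/

section Calculus

variable {𝕜 : Type*} [NontriviallyNormedField 𝕜] {E F : Type*}
  [NormedAddCommGroup E] [NormedSpace 𝕜 E] [NormedAddCommGroup F] [NormedSpace 𝕜 F]

lemma hasDerivAt_tuple6 {f₁ f₂ f₃ f₄ f₅ f₆ : 𝕜 → F} {d₁ d₂ d₃ d₄ d₅ d₆ : F} {t : 𝕜}
    (h₁ : HasDerivAt f₁ d₁ t) (h₂ : HasDerivAt f₂ d₂ t) (h₃ : HasDerivAt f₃ d₃ t)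
    (h₄ : HasDerivAt f₄ d₄ t) (h₅ : HasDerivAt f₅ d₅ t) (h₆ : HasDerivAt f₆ d₆ t) :
    HasDerivAt (fun u => (f₁ u, f₂ u, f₃ u, f₄ u, f₅ u, f₆ u)) (d₁, d₂, d₃, d₄, d₅, d₆) t :=
  h₁.prodMk (h₂.prodMk (h₃.prodMk (h₄.prodMk (h₅.prodMk h₆))))

lemma fderiv_fderiv_apply_const {f : E → F} {x : E} (hf : DifferentiableAt 𝕜 (fderiv 𝕜 f) x)
    (u v : E) : fderiv 𝕜 (fun y => fderiv 𝕜 f y v) x u = fderiv 𝕜 (fderiv 𝕜 f) x u v := by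
  simp [fderiv_clm_apply hf (differentiableAt_const v)]

lemma deriv_deriv_comp {f : E → F} (hf : ContDiff 𝕜 2 f) {γ : 𝕜 → 𝕜 → E} {β : 𝕜 → E}
    {α β' : E} {x y : 𝕜} (hγ₁ : ∀ s, HasDerivAt (γ · s) (β s) x) (hγ₂ : HasDerivAt (γ x) α y)
    (hβ : HasDerivAt β β' y) :
    deriv (fun s => deriv (fun t => f (γ t s)) x) y
      = fderiv 𝕜 f (γ x y) β' + fderiv 𝕜 (fderiv 𝕜 f) (γ x y) α (β y) := by
  have hf₁ : Differentiable 𝕜 f := hf.differentiable (by simp)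
  have hf₂ : Differentiable 𝕜 (fderiv 𝕜 f) :=
    (hf.fderiv_right (m := 1) (by norm_num)).differentiable (by simp)
  have inner : (fun s => deriv (fun t => f (γ t s)) x) = fun s => fderiv 𝕜 f (γ x s) (β s) :=
    funext fun s => ((hf₁ _).hasFDerivAt.comp_hasDerivAt x (hγ₁ s)).deriv
  rw [inner]
  exact (((hf₂ _).hasFDerivAt.comp_hasDerivAt y hγ₂).clm_apply hβ).deriv.trans (add_comm _ _)

end Calculus

abbrev Fun6 : Type := ℂ → ℂ → ℂ → ℂ → ℂ → ℂ → ℂ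

abbrev E6 : Type := ℂ × ℂ × ℂ × ℂ × ℂ × ℂ

def uncurry6 (G : Fun6) : E6 → ℂ :=
  fun v => G v.1 v.2.1 v.2.2.1 v.2.2.2.1 v.2.2.2.2.1 v.2.2.2.2.2

local notation "𝐞₁" => ((1, 0, 0, 0, 0, 0) : E6)
local notation "𝐞₂" => ((0, 1, 0, 0, 0, 0) : E6)
local notation "𝐞₃" => ((0, 0, 1, 0, 0, 0) : E6)
local notation "𝐞₁₂" => ((0, 0, 0, 1, 0, 0) : E6)
local notation "𝐞₁₃" => ((0, 0, 0, 0, 1, 0) : E6)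
local notation "𝐞₂₃" => ((0, 0, 0, 0, 0, 1) : E6)

lemma E6.eq_sum_smul (d₁ d₂ d₃ d₄ d₅ d₆ : ℂ) :
    ((d₁, d₂, d₃, d₄, d₅, d₆) : E6)
      = d₁ • 𝐞₁ + d₂ • 𝐞₂ + d₃ • 𝐞₃ + d₄ • 𝐞₁₂ + d₅ • 𝐞₁₃ + d₆ • 𝐞₂₃ := by
  simp

def IsPartialDerivAlong (P : Fun6 → Fun6) (u : E6) : Prop :=
  ∀ G, Differentiable ℂ (uncurry6 G) →
    ∀ a b c p q s, P G a b c p q s = fderiv ℂ (uncurry6 G) (a, b, c, p, q, s) u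

lemma isPartialDerivAlong_e1 : IsPartialDerivAlong e1 𝐞₁ := fun _ hG a b c p q s =>
  ((hG _).hasFDerivAt.comp_hasDerivAt a (hasDerivAt_tuple6 (hasDerivAt_id' a)
    (hasDerivAt_const a b) (hasDerivAt_const a c) (hasDerivAt_const a p) (hasDerivAt_const a q)
    (hasDerivAt_const a s))).deriv

lemma isPartialDerivAlong_e2 : IsPartialDerivAlong e2 𝐞₂ := fun _ hG a b c p q s =>
  ((hG _).hasFDerivAt.comp_hasDerivAt b (hasDerivAt_tuple6 (hasDerivAt_const b a)
    (hasDerivAt_id' b) (hasDerivAt_const b c) (hasDerivAt_const b p) (hasDerivAt_const b q)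
    (hasDerivAt_const b s))).deriv

lemma isPartialDerivAlong_e12 : IsPartialDerivAlong e12 𝐞₁₂ := fun _ hG a b c p q s =>
  ((hG _).hasFDerivAt.comp_hasDerivAt p (hasDerivAt_tuple6 (hasDerivAt_const p a)
    (hasDerivAt_const p b) (hasDerivAt_const p c) (hasDerivAt_id' p) (hasDerivAt_const p q)
    (hasDerivAt_const p s))).deriv

lemma isPartialDerivAlong_e13 : IsPartialDerivAlong e13 𝐞₁₃ := fun _ hG a b c p q s =>
  ((hG _).hasFDerivAt.comp_hasDerivAt q (hasDerivAt_tuple6 (hasDerivAt_const q a)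
    (hasDerivAt_const q b) (hasDerivAt_const q c) (hasDerivAt_const q p) (hasDerivAt_id' q)
    (hasDerivAt_const q s))).deriv

lemma isPartialDerivAlong_e23 : IsPartialDerivAlong e23 𝐞₂₃ := fun _ hG a b c p q s =>
  ((hG _).hasFDerivAt.comp_hasDerivAt s (hasDerivAt_tuple6 (hasDerivAt_const s a)
    (hasDerivAt_const s b) (hasDerivAt_const s c) (hasDerivAt_const s p) (hasDerivAt_const s q)
    (hasDerivAt_id' s))).deriv

lemma IsPartialDerivAlong.comp {P Q : Fun6 → Fun6} {u u' : E6} (hP : IsPartialDerivAlong P u)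
    (hQ : IsPartialDerivAlong Q u') {G : Fun6} (hG : ContDiff ℂ 2 (uncurry6 G)) (a b c p q s : ℂ) :
    P (Q G) a b c p q s = fderiv ℂ (fderiv ℂ (uncurry6 G)) (a, b, c, p, q, s) u u' := by
  have hG₂ : Differentiable ℂ (fderiv ℂ (uncurry6 G)) :=
    (hG.fderiv_right (m := 1) (by norm_num)).differentiable (by simp)
  have hQG : uncurry6 (Q G) = fun v => fderiv ℂ (uncurry6 G) v u' :=
    funext fun _ => hQ G (hG.differentiable (by simp)) _ _ _ _ _ _
  have hQG_diff : Differentiable ℂ (uncurry6 (Q G)) := by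
    rw [hQG]
    fun_prop
  rw [hP _ hQG_diff, hQG, fderiv_fderiv_apply_const (hG₂ _)]

/-- The second-order part of `Delta3`, with `∂ᵢ∂ⱼG` replaced by `B 𝐞ᵢ 𝐞ⱼ`. -/
def delta3Principal (B : E6 →L[ℂ] E6 →L[ℂ] ℂ) (a b c p q s : ℂ) : ℂ :=
  2 * a * B 𝐞₁ 𝐞₁₂ + 2 * b * B 𝐞₂ 𝐞₁₂ + c * B 𝐞₁₃ 𝐞₂₃ + p * (4 * B 𝐞₁ 𝐞₂ + B 𝐞₁₂ 𝐞₁₂)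
    + q * (2 * B 𝐞₁ 𝐞₂₃ + B 𝐞₁₂ 𝐞₁₃) + s * (2 * B 𝐞₂ 𝐞₁₃ + B 𝐞₁₂ 𝐞₂₃)

lemma Delta3_eq_fderiv {G : Fun6} (hG : ContDiff ℂ 2 (uncurry6 G)) (D : ℕ) (a b c p q s : ℂ) :
    Delta3 D G a b c p q s = D * fderiv ℂ (uncurry6 G) (a, b, c, p, q, s) 𝐞₁₂
      + delta3Principal (fderiv ℂ (fderiv ℂ (uncurry6 G)) (a, b, c, p, q, s)) a b c p q s := by
  rw [Delta3, delta3Principal, isPartialDerivAlong_e12 G (hG.differentiable (by simp)),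
    isPartialDerivAlong_e1.comp isPartialDerivAlong_e12 hG,
    isPartialDerivAlong_e2.comp isPartialDerivAlong_e12 hG,
    isPartialDerivAlong_e13.comp isPartialDerivAlong_e23 hG,
    isPartialDerivAlong_e1.comp isPartialDerivAlong_e2 hG,
    isPartialDerivAlong_e12.comp isPartialDerivAlong_e12 hG,
    isPartialDerivAlong_e1.comp isPartialDerivAlong_e23 hG,
    isPartialDerivAlong_e12.comp isPartialDerivAlong_e13 hG,
    isPartialDerivAlong_e2.comp isPartialDerivAlong_e13 hG,
    isPartialDerivAlong_e12.comp isPartialDerivAlong_e23 hG]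
  ring

lemma bilinear_velocities_eq {B : E6 →L[ℂ] E6 →L[ℂ] ℂ} (hB : ∀ u v, B u v = B v u) (x y w : ℂ) :
    B (0, 2 * y, 0, x, 0, w) (2 * x, 0, 0, y, w, 0)
      = x * x * (2 * B 𝐞₁ 𝐞₁₂) + y * y * (2 * B 𝐞₂ 𝐞₁₂) + w * w * B 𝐞₁₃ 𝐞₂₃
        + x * y * (4 * B 𝐞₁ 𝐞₂ + B 𝐞₁₂ 𝐞₁₂) + x * w * (2 * B 𝐞₁ 𝐞₂₃ + B 𝐞₁₂ 𝐞₁₃)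
        + y * w * (2 * B 𝐞₂ 𝐞₁₃ + B 𝐞₁₂ 𝐞₂₃) := by
  rw [E6.eq_sum_smul 0, E6.eq_sum_smul (2 * x)]
  simp only [map_add, map_smul, add_apply, smul_apply, zero_smul, add_zero, zero_add, smul_eq_mul]
  rw [hB 𝐞₂ 𝐞₁, hB 𝐞₁₂ 𝐞₁, hB 𝐞₂₃ 𝐞₁, hB 𝐞₂₃ 𝐞₁₂, hB 𝐞₂₃ 𝐞₁₃]
  ring

lemma sum_bilinear_velocities_eq_delta3Principal {D : ℕ} {B : E6 →L[ℂ] E6 →L[ℂ] ℂ}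
    (hB : ∀ u v, B u v = B v u) (z₁ z₂ z₃ : Fin D → ℂ) :
    ∑ j, B (0, 2 * z₂ j, 0, z₁ j, 0, z₃ j) (2 * z₁ j, 0, 0, z₂ j, z₃ j, 0)
      = delta3Principal B (cdot z₁ z₁) (cdot z₂ z₂) (cdot z₃ z₃)
          (cdot z₁ z₂) (cdot z₁ z₃) (cdot z₂ z₃) := by
  simp only [bilinear_velocities_eq hB, Finset.sum_add_distrib, ← Finset.sum_mul]
  simp only [delta3Principal, cdot]
  ring

lemma cdot_update_update {D : ℕ} (z w : Fin D → ℂ) (j : Fin D) (t s : ℂ) :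
    cdot (Function.update z j t) (Function.update w j s) = cdot z w - z j * w j + t * s := by
  have hzw : (fun k => Function.update z j t k * Function.update w j s k)
      = Function.update (fun k => z k * w k) j (t * s) :=
    (Function.update_mul z w j t s).symm
  rw [cdot, cdot, hzw, Finset.sum_update_of_mem (Finset.mem_univ j),
    Finset.sum_eq_add_sum_sdiff_singleton_of_mem (Finset.mem_univ j) (fun k => z k * w k)]
  ring

lemma cdot_update_left {D : ℕ} (z w : Fin D → ℂ) (j : Fin D) (t : ℂ) :
    cdot (Function.update z j t) w = cdot z w - z j * w j + t * w j := by
  simpa using cdot_update_update z w j t (w j)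

lemma deriv_deriv_comp_quadratic {F : E6 → ℂ} (hF : ContDiff ℂ 2 F) (a b c p q r x y w : ℂ) :
    deriv (fun s => deriv (fun t => F (a - x * x + t * t, b - y * y + s * s, c,
        p - x * y + t * s, q - x * w + t * w, r - y * w + s * w)) x) y
      = fderiv ℂ F (a, b, c, p, q, r) 𝐞₁₂
        + fderiv ℂ (fderiv ℂ F) (a, b, c, p, q, r) (0, 2 * y, 0, x, 0, w)
            (2 * x, 0, 0, y, w, 0) := by
  have hsq : ∀ k z : ℂ, HasDerivAt (fun t => k + t * t) (2 * z) z := fun k z => by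
    simpa [two_mul] using ((hasDerivAt_id' z).mul (hasDerivAt_id' z)).const_add k
  have hlin : ∀ k m z : ℂ, HasDerivAt (fun t => k + t * m) m z := fun k m z => by
    simpa using ((hasDerivAt_id' z).mul_const m).const_add k
  have hlin' : ∀ k m z : ℂ, HasDerivAt (fun t => k + m * t) m z := fun k m z => by
    simpa using ((hasDerivAt_id' z).const_mul m).const_add k
  refine (deriv_deriv_comp hF (β := fun s => (2 * x, 0, 0, s, w, 0))
    (fun s => hasDerivAt_tuple6 (hsq _ x) (hasDerivAt_const x _) (hasDerivAt_const x _)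
      (hlin _ s x) (hlin _ w x) (hasDerivAt_const x _))
    (hasDerivAt_tuple6 (hasDerivAt_const y _) (hsq _ y) (hasDerivAt_const y _)
      (hlin' _ x y) (hasDerivAt_const y _) (hlin _ w y))
    (hasDerivAt_tuple6 (hasDerivAt_const y _) (hasDerivAt_const y _) (hasDerivAt_const y _)
      (hasDerivAt_id' y) (hasDerivAt_const y _) (hasDerivAt_const y _))).trans ?_
  simp only [sub_add_cancel]

theorem laplacian_triple_eq_Delta3_general (D : ℕ)
    (G : ℂ → ℂ → ℂ → ℂ → ℂ → ℂ → ℂ)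
    (hG : AnalyticOnNhd ℂ
      (fun v : ℂ × ℂ × ℂ × ℂ × ℂ × ℂ =>
        G v.1 v.2.1 v.2.2.1 v.2.2.2.1 v.2.2.2.2.1 v.2.2.2.2.2) Set.univ)
    (z₁ z₂ z₃ : Fin D → ℂ) :
    (∑ j, deriv (fun s => deriv (fun t =>
        G (cdot (Function.update z₁ j t) (Function.update z₁ j t))
          (cdot (Function.update z₂ j s) (Function.update z₂ j s))
          (cdot z₃ z₃)
          (cdot (Function.update z₁ j t) (Function.update z₂ j s))
          (cdot (Function.update z₁ j t) z₃)
          (cdot (Function.update z₂ j s) z₃)) (z₁ j)) (z₂ j))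
      = Delta3 D G (cdot z₁ z₁) (cdot z₂ z₂) (cdot z₃ z₃)
          (cdot z₁ z₂) (cdot z₁ z₃) (cdot z₂ z₃) := by
  have hF : ContDiff ℂ 2 (uncurry6 G) := hG.contDiff
  simp only [cdot_update_update]
  simp only [cdot_update_left]
  refine (Finset.sum_congr rfl fun j _ => deriv_deriv_comp_quadratic hF (cdot z₁ z₁) (cdot z₂ z₂)
    (cdot z₃ z₃) (cdot z₁ z₂) (cdot z₁ z₃) (cdot z₂ z₃) (z₁ j) (z₂ j) (z₃ j)).trans ?_
  rw [Finset.sum_add_distrib, Finset.sum_const, Finset.card_univ, Fintype.card_fin, nsmul_eq_mul,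
    sum_bilinear_velocities_eq_delta3Principal (hF.contDiffAt.isSymmSndFDerivAt (by simp)),
    Delta3_eq_fderiv hF]

/-- **`Σ_j ∂²/∂z_{1,j}∂z_{2,j} G(z₁·z₁, z₂·z₂, z₃·z₃, z₁·z₂, z₁·z₃, z₂·z₃)
 = (Δ_{3,D}G)(z₁·z₁, z₂·z₂, z₃·z₃, z₁·z₂, z₁·z₃, z₂·z₃)`** for every entire
`G : ℂ⁶ → ℂ` and all `z₁, z₂, z₃ ∈ ℂ^D`. -/
theorem laplacian_triple_eq_Delta3 (D : ℕ) (hD : 0 < D)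
    (G : ℂ → ℂ → ℂ → ℂ → ℂ → ℂ → ℂ)
    (hG : AnalyticOnNhd ℂ
      (fun v : ℂ × ℂ × ℂ × ℂ × ℂ × ℂ =>
        G v.1 v.2.1 v.2.2.1 v.2.2.2.1 v.2.2.2.2.1 v.2.2.2.2.2) Set.univ)
    (z₁ z₂ z₃ : Fin D → ℂ) :
    (∑ j, deriv (fun s => deriv (fun t =>
        G (cdot (Function.update z₁ j t) (Function.update z₁ j t))
          (cdot (Function.update z₂ j s) (Function.update z₂ j s))
          (cdot z₃ z₃)
          (cdot (Function.update z₁ j t) (Function.update z₂ j s))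
          (cdot (Function.update z₁ j t) z₃)
          (cdot (Function.update z₂ j s) z₃)) (z₁ j)) (z₂ j))
      = Delta3 D G (cdot z₁ z₁) (cdot z₂ z₂) (cdot z₃ z₃)
          (cdot z₁ z₂) (cdot z₁ z₃) (cdot z₂ z₃) :=
  laplacian_triple_eq_Delta3_general D G hG z₁ z₂ z₃
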